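/- arXiv:2309.02624 — 7 statements merged into one kernel-verified Lean document; each statement's English description precedes it below -/
import Mathlib

section
/- Let a and b be coprime positive integers and let p ∈ ℂ[x,y] be a nonzero quasihomogeneous polynomial of type (d; a, b). Then there exist a nonzero constant c ∈ ℂ, natural numbers e, l, k, and nonzero complex numbers α_1, …, α_k such that p = c · x^e · y^l · ∏_{i=1}^{k} (y^a − α_i x^b); consequently d = e·a + l·b + k·a·b. Moreover, if p is squarefree, then e ≤ 1, l ≤ 1 and the α_i are pairwise distinct. -/
/-!
Two monomials of the same weighted degree satisfy `(i - i') a = (j' - j) b`, so by coprimality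
their exponents differ by a multiple of `(b, -a)`. Hence, once the minimal powers `x^e y^l` are
factored out, `p` is the image of a binary form `H(u, v)` of degree `k` under `u ↦ y^a, v ↦ x^b`.
`H` is the homogenization of a one-variable polynomial `q` of degree `k` with `q(0) ≠ 0`, which
splits over `ℂ` into factors `u - α v` with `α ≠ 0`. Every factor vanishes at the origin, so none
is a unit, and a repeated factor contradicts squarefreeness.
-/

open MvPolynomial

theorem Nat.exists_eq_add_mul_of_mul_add_mul_eq {a b i j i' j' : ℕ} (hb : 0 < b)
    (hab : a.Coprime b) (h : i * a + j * b = i' * a + j' * b) (hi : i' ≤ i) :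
    ∃ s, i = i' + s * b ∧ j' = j + s * a := by
  have hj : j ≤ j' := by
    refine Nat.le_of_mul_le_mul_right ?_ hb
    nlinarith [Nat.mul_le_mul_right a hi]
  obtain ⟨t, rfl⟩ := Nat.exists_eq_add_of_le hi
  obtain ⟨u, rfl⟩ := Nat.exists_eq_add_of_le hj
  have htu : t * a = u * b := by linarith
  obtain ⟨s, rfl⟩ : b ∣ t := hab.symm.dvd_of_dvd_mul_right ⟨u, by rw [htu, mul_comm]⟩
  have hus : u = s * a := Nat.eq_of_mul_eq_mul_left hb (by linarith)
  exact ⟨s, by ring, by rw [hus]⟩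

theorem Nat.exists_le_eq_of_mul_add_mul_eq {a b e l k i j : ℕ} (ha : 0 < a) (hb : 0 < b)
    (hab : a.Coprime b) (h : i * a + j * b = e * a + (l + k * a) * b) (hi : e ≤ i) (hj : l ≤ j) :
    ∃ t ≤ k, i = e + (k - t) * b ∧ j = l + t * a := by
  obtain ⟨s, hi, hs⟩ := Nat.exists_eq_add_mul_of_mul_add_mul_eq hb hab h hi
  have hsk : s ≤ k := Nat.le_of_mul_le_mul_right (by linarith) ha
  obtain ⟨t, rfl⟩ := Nat.exists_eq_add_of_le hsk
  exact ⟨t, by omega, by rw [hi, Nat.add_sub_cancel], by linarith⟩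

theorem Finsupp.eq_single_zero_add_single_one (m : Fin 2 →₀ ℕ) :
    m = Finsupp.single 0 (m 0) + Finsupp.single 1 (m 1) := by
  ext i
  fin_cases i <;> simp

theorem MvPolynomial.eq_sum_monomial_of_support_subset_image {R σ ι : Type*} [CommSemiring R]
    [DecidableEq (σ →₀ ℕ)] {p : MvPolynomial σ R} {s : Finset ι} {f : ι → σ →₀ ℕ}
    (hf : Set.InjOn f s) (hp : p.support ⊆ s.image f) :
    p = ∑ i ∈ s, monomial (f i) (coeff (f i) p) := by
  rw [← Finset.sum_image (f := fun m ↦ monomial m (coeff m p)) hf,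
    ← Finset.sum_subset hp fun m _ hm ↦ by rw [notMem_support_iff.mp hm, monomial_zero]]
  exact p.as_sum

theorem MvPolynomial.monomial_single_zero_add_single_one {R : Type*} [CommSemiring R]
    (i j : ℕ) (c : R) :
    monomial (Finsupp.single (0 : Fin 2) i + Finsupp.single 1 j) c = C c * X 0 ^ i * X 1 ^ j := by
  rw [monomial_single_add, ← C_mul_X_pow_eq_monomial]
  ring

theorem Polynomial.coeff_sum_range_C_mul_X_pow {R : Type*} [Semiring R] (c : ℕ → R) {k t : ℕ}
    (ht : t ≤ k) :
    (∑ i ∈ Finset.range (k + 1), Polynomial.C (c i) * Polynomial.X ^ i).coeff t = c t := by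
  simp [Nat.lt_succ_of_le ht]

theorem Polynomial.natDegree_sum_range_C_mul_X_pow_le {R : Type*} [Semiring R] (c : ℕ → R)
    (k : ℕ) : (∑ i ∈ Finset.range (k + 1), Polynomial.C (c i) * Polynomial.X ^ i).natDegree ≤ k :=
  Polynomial.natDegree_sum_le_of_forall_le _ _ fun _ hi ↦
    (Polynomial.natDegree_C_mul_X_pow_le _ _).trans (Nat.lt_succ_iff.mp (Finset.mem_range.mp hi))

theorem X_pow_mul_X_pow_mul_aeval_homogenize_sum {R : Type*} [CommSemiring R] (c : ℕ → R)
    (a b e l k : ℕ) :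
    X 0 ^ e * X 1 ^ l * aeval ![X 1 ^ a, X 0 ^ b]
        ((∑ t ∈ Finset.range (k + 1), Polynomial.C (c t) * Polynomial.X ^ t).homogenize k) =
      ∑ t ∈ Finset.range (k + 1), monomial
        (Finsupp.single (0 : Fin 2) (e + (k - t) * b) + Finsupp.single 1 (l + t * a)) (c t) := by
  simp only [Polynomial.homogenize_finsetSum, Polynomial.homogenize_C_mul, map_sum,
    Finset.mul_sum]
  refine Finset.sum_congr rfl fun t ht ↦ ?_
  rw [Polynomial.homogenize_X_pow (Nat.lt_succ_iff.mp (Finset.mem_range.mp ht)),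
    monomial_single_zero_add_single_one (R := R), pow_add, pow_add]
  simp only [map_mul, map_pow, aeval_C, aeval_X, algebraMap_eq, Matrix.cons_val_zero,
    Matrix.cons_val_one]
  ring

theorem exists_homogenize_eq_C_mul_prod {K : Type*} [Field K] [IsAlgClosed K] {q : Polynomial K}
    (hq : q.coeff 0 ≠ 0) :
    ∃ α : Fin q.natDegree → K, (∀ i, α i ≠ 0) ∧
      q.homogenize q.natDegree = C q.leadingCoeff * ∏ i, (X 0 - C (α i) * X 1) := by
  classical
  have hcard : Multiset.card q.roots = q.natDegree := IsAlgClosed.card_roots_eq_natDegree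
  let σ : q.roots ≃ Fin q.natDegree := Fintype.equivFinOfCardEq (q.roots.card_coe.trans hcard)
  let α : Fin q.natDegree → K := fun i ↦ σ.symm i
  have hroot : ∀ i, q.IsRoot (α i) := fun i ↦ Polynomial.isRoot_of_mem_roots Multiset.coe_mem
  refine ⟨α, fun i h ↦ hq ?_, ?_⟩
  · simpa [h, Polynomial.coeff_zero_eq_eval_zero] using hroot i
  have hfac : q = Polynomial.C q.leadingCoeff * ∏ i, (Polynomial.X - Polynomial.C (α i)) := by
    conv_lhs => rw [← Polynomial.C_leadingCoeff_mul_prod_multiset_X_sub_C hcard]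
    rw [← Multiset.map_univ, ← Finset.prod_eq_multiset_prod]
    exact congrArg _ (Fintype.prod_equiv σ _ _ fun x ↦ by simp [α])
  calc q.homogenize q.natDegree
      = (Polynomial.C q.leadingCoeff * ∏ i, (Polynomial.X - Polynomial.C (α i))).homogenize
          (∑ _i : Fin q.natDegree, 1) := by rw [← hfac]; simp
    _ = C q.leadingCoeff * ∏ i, (X 0 - C (α i) * X 1) := by
      rw [Polynomial.homogenize_C_mul, Polynomial.homogenize_finsetProd fun i _ ↦
        Polynomial.natDegree_X_sub_C_le (α i)]
      simp [Polynomial.homogenize_sub]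

theorem exists_eq_X_pow_mul_X_pow_mul_aeval_homogenize {R : Type*} [CommSemiring R] {a b d : ℕ}
    (ha : 0 < a) (hb : 0 < b) (hab : a.Coprime b) {p : MvPolynomial (Fin 2) R} (hp : p ≠ 0)
    (hqh : ∀ m ∈ p.support, m 0 * a + m 1 * b = d) :
    ∃ (e l : ℕ) (q : Polynomial R), q.coeff 0 ≠ 0 ∧ d = e * a + l * b + q.natDegree * (a * b) ∧
      p = X 0 ^ e * X 1 ^ l * aeval ![X 1 ^ a, X 0 ^ b] (q.homogenize q.natDegree) := by
  classical
  have hS : p.support.Nonempty := support_nonempty.mpr hp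
  obtain ⟨me, hme, hme_min⟩ := p.support.exists_min_image (· 0) hS
  obtain ⟨ml, hml, hml_min⟩ := p.support.exists_min_image (· 1) hS
  obtain ⟨k, hml0, hme1⟩ := Nat.exists_eq_add_mul_of_mul_add_mul_eq hb hab
    ((hqh ml hml).trans (hqh me hme).symm) (hme_min ml hml)
  let w : ℕ → Fin 2 →₀ ℕ := fun t ↦
    Finsupp.single 0 (me 0 + (k - t) * b) + Finsupp.single 1 (ml 1 + t * a)
  have hw1 : ∀ t, w t 1 = ml 1 + t * a := fun t ↦ by simp [w]
  have hsupp : p.support ⊆ (Finset.range (k + 1)).image w := by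
    intro m hm
    obtain ⟨t, htk, hm0, hm1⟩ := Nat.exists_le_eq_of_mul_add_mul_eq ha hb hab
      (by rw [hqh m hm, ← hme1, hqh me hme]) (hme_min m hm) (hml_min m hm)
    refine Finset.mem_image.mpr ⟨t, Finset.mem_range.mpr (by omega), ?_⟩
    rw [m.eq_single_zero_add_single_one, hm0, hm1]
  have hinj : Set.InjOn w (Finset.range (k + 1)) := fun s _ t _ hst ↦
    Nat.eq_of_mul_eq_mul_right ha (by simpa [hw1] using congrArg (· 1) hst)
  set q := ∑ t ∈ Finset.range (k + 1), Polynomial.C (coeff (w t) p) * Polynomial.X ^ t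
  have hw0 : w 0 = ml := by
    rw [ml.eq_single_zero_add_single_one, hml0]
    simp [w]
  have hwk : w k = me := by
    rw [me.eq_single_zero_add_single_one, hme1]
    simp [w]
  have hqk : q.coeff k ≠ 0 := by
    rw [Polynomial.coeff_sum_range_C_mul_X_pow _ le_rfl, hwk]
    exact mem_support_iff.mp hme
  have hdeg : q.natDegree = k :=
    le_antisymm (Polynomial.natDegree_sum_range_C_mul_X_pow_le _ _)
      (Polynomial.le_natDegree_of_ne_zero hqk)
  refine ⟨me 0, ml 1, q, ?_, ?_, ?_⟩
  · rw [Polynomial.coeff_sum_range_C_mul_X_pow _ (Nat.zero_le k), hw0]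
    exact mem_support_iff.mp hml
  · rw [hdeg, ← hqh me hme, hme1]
    ring
  · rw [hdeg, X_pow_mul_X_pow_mul_aeval_homogenize_sum]
    exact eq_sum_monomial_of_support_subset_image hinj hsupp

theorem MvPolynomial.not_squarefree_of_mul_self_dvd {R σ : Type*} [CommSemiring R] [Nontrivial R]
    {p f : MvPolynomial σ R} (x : σ → R) (hf : eval x f = 0) (h : f * f ∣ p) : ¬Squarefree p :=
  fun hp ↦ not_isUnit_zero (hf ▸ (hp f h).map (eval x))

theorem le_one_and_le_one_and_injective_of_squarefree {R : Type*} [CommRing R] [Nontrivial R]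
    {a b e l k : ℕ} (ha : 0 < a) (hb : 0 < b) {c : R} {α : Fin k → R}
    (h : Squarefree (C c * X 0 ^ e * X 1 ^ l * ∏ i, (X 1 ^ a - C (α i) * X 0 ^ b) :
      MvPolynomial (Fin 2) R)) :
    e ≤ 1 ∧ l ≤ 1 ∧ Function.Injective α := by
  set g : Fin k → MvPolynomial (Fin 2) R := fun i ↦ X 1 ^ a - C (α i) * X 0 ^ b
  set F := ∏ i, g i
  refine ⟨?_, ?_, fun i j hij ↦ ?_⟩
  · by_contra! he
    refine not_squarefree_of_mul_self_dvd 0 (eval_X 0) ?_ h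
    rw [← sq]
    exact (pow_dvd_pow _ he).trans ⟨C c * X 1 ^ l * F, by ring⟩
  · by_contra! hl
    refine not_squarefree_of_mul_self_dvd 0 (eval_X 1) ?_ h
    rw [← sq]
    exact (pow_dvd_pow _ hl).trans ⟨C c * X 0 ^ e * F, by ring⟩
  · by_contra hne
    have hgi : g i * g i ∣ F :=
      calc g i * g i = ∏ x ∈ {i, j}, g x := by
            rw [Finset.prod_pair hne, show g j = g i by simp [g, hij]]
        _ ∣ F := Finset.prod_dvd_prod_of_subset _ _ _ (Finset.subset_univ _)
    exact not_squarefree_of_mul_self_dvd 0 (by simp [g, ha.ne', hb.ne'])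
      (hgi.trans (dvd_mul_left _ _)) h

/-- Let `a` and `b` be coprime positive integers and let
`p ∈ ℂ[x,y]` be a nonzero quasihomogeneous polynomial of type `(d; a, b)`
(i.e. every monomial `x^i y^j` of `p` satisfies `i·a + j·b = d`). Then there
exist a nonzero constant `c`, natural numbers `e, l, k` and nonzero complex
numbers `α₁, …, α_k` such that
`p = c · x^e · y^l · ∏ i, (y^a − α_i x^b)`, and consequently
`d = e·a + l·b + k·a·b`. Moreover, if `p` is squarefree then `e ≤ 1`, `l ≤ 1`
and the `α_i` are pairwise distinct. -/
theorem stmt0 (a b d : ℕ) (ha : 0 < a) (hb : 0 < b) (hab : Nat.Coprime a b)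
    (p : MvPolynomial (Fin 2) ℂ) (hp : p ≠ 0)
    (hqh : ∀ m ∈ p.support, m 0 * a + m 1 * b = d) :
    ∃ (c : ℂ) (e l k : ℕ) (α : Fin k → ℂ), c ≠ 0 ∧ (∀ i, α i ≠ 0) ∧
      p = C c * X 0 ^ e * X 1 ^ l * ∏ i, (X 1 ^ a - C (α i) * X 0 ^ b) ∧
      d = e * a + l * b + k * (a * b) ∧
      (Squarefree p → e ≤ 1 ∧ l ≤ 1 ∧ Function.Injective α) := by
  obtain ⟨e, l, q, hq0, hd, hpq⟩ := exists_eq_X_pow_mul_X_pow_mul_aeval_homogenize ha hb hab hp hqh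
  obtain ⟨α, hα0, hq⟩ := exists_homogenize_eq_C_mul_prod hq0
  have hp_eq : p = C q.leadingCoeff * X 0 ^ e * X 1 ^ l * ∏ i, (X 1 ^ a - C (α i) * X 0 ^ b) := by
    rw [hpq, hq]
    simp only [map_mul, map_prod, map_sub, aeval_C, aeval_X, algebraMap_eq, Matrix.cons_val_zero,
      Matrix.cons_val_one]
    ring
  have hc : q.leadingCoeff ≠ 0 := Polynomial.leadingCoeff_ne_zero.mpr fun h ↦ hq0 (by simp [h])
  exact ⟨q.leadingCoeff, e, l, q.natDegree, α, hc, hα0, hp_eq, hd, fun hsq ↦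
    le_one_and_le_one_and_injective_of_squarefree ha hb (hp_eq ▸ hsq)⟩
end

section
/- Let a, b, n, m be positive integers with 3 ≤ n ≤ m. Let η be the greatest integer with n − η·a ≥ 1 and θ the greatest integer with m − θ·a ≥ 1, and assume η ≥ 1 and θ ≥ 1. Let b_1, …, b_η and c_1, …, c_θ be complex numbers, and define in ℂ[[x,y]]: g_2 = n·y^{n−1} + Σ_{j=1}^{η} (n − j a)·b_j·x^{j b}·y^{n − j a − 1} and g_3 = m·y^{m−1} + Σ_{j=1}^{θ} (m − j a)·c_j·x^{j b}·y^{m − j a − 1}. If the quotient ℂ[[x,y]]/(g_2, g_3) is a finite-dimensional ℂ-vector space, then either (b_η ≠ 0 and n − η·a = 1) or (c_θ ≠ 0 and m − θ·a = 1). -/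
/-! If neither alternative holds, every term of `g₂` and `g₃` contains `y`, so `(g₂, g₃) ⊆ (y)`
and `ℂ[[x,y]]/(g₂, g₃)` surjects onto `ℂ[[x,y]]/(y)`. There the powers of `x` remain linearly
independent, as the coefficients of `x^k` vanish on `(y)`; so the quotient is infinite-dimensional. -/

open MvPowerSeries

namespace MvPowerSeries

theorem coeff_single_eq_zero_of_X_dvd {σ R : Type*} [CommSemiring R] {i j : σ} (hij : i ≠ j)
    {φ : MvPowerSeries σ R} (h : X i ∣ φ) (k : ℕ) : coeff (Finsupp.single j k) φ = 0 :=
  X_dvd_iff.mp h _ (Finsupp.single_eq_of_ne hij)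

variable {σ K : Type*} [Field K]

theorem linearIndependent_mk_X_pow_of_le_span_X {I : Ideal (MvPowerSeries σ K)} {i j : σ}
    (hij : i ≠ j) (hI : I ≤ Ideal.span {X i}) :
    LinearIndependent K fun k : ℕ => Ideal.Quotient.mk I (X j ^ k) := by
  classical
  let coeffsAlong : MvPowerSeries σ K →ₗ[K] ℕ → K :=
    LinearMap.pi fun k => coeff (Finsupp.single j k)
  have hker : I.restrictScalars K ≤ LinearMap.ker coeffsAlong := fun φ hφ => by
    ext k
    exact coeff_single_eq_zero_of_X_dvd hij (Ideal.mem_span_singleton.mp (hI hφ)) k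
  let f := (I.restrictScalars K).liftQ coeffsAlong hker ∘ₗ
    (Submodule.Quotient.restrictScalarsEquiv K I).symm.toLinearMap
  have hf : f ∘ (fun k : ℕ => Ideal.Quotient.mk I (X j ^ k)) = fun k => Pi.single k 1 := by
    ext k l
    change coeff (Finsupp.single j l) (X j ^ k) = (Pi.single k 1 : ℕ → K) l
    simp [coeff_X_pow, Pi.single_apply, (Finsupp.single_injective j).eq_iff]
  exact .of_comp f (hf ▸ Pi.linearIndependent_single_one ℕ K)

theorem not_finite_quotient_of_le_span_X {I : Ideal (MvPowerSeries σ K)} {i j : σ}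
    (hij : i ≠ j) (hI : I ≤ Ideal.span {X i}) :
    ¬ Module.Finite K (MvPowerSeries σ K ⧸ I) := fun _ =>
  Module.Finite.not_linearIndependent_of_infinite _ (linearIndependent_mk_X_pow_of_le_span_X hij hI)

end MvPowerSeries

/-- `∂/∂y (y ^ n + ∑_{j=1}^{η} c_j x^{jb} y^{n-ja})` in `R[[x, y]]`, where `x = X 0` and `y = X 1`. -/
noncomputable def quasihomogeneousDerivY {R : Type*} [CommSemiring R] (a b n η : ℕ) (c : ℕ → R) :
    MvPowerSeries (Fin 2) R :=
  C (n : R) * X 1 ^ (n - 1) +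
    ∑ j ∈ Finset.Icc 1 η, C (((n - j * a : ℕ) : R) * c j) * X 0 ^ (j * b) * X 1 ^ (n - j * a - 1)

/-- Only the term `j = η` can be free of `y`, and only when `n - ηa = 1`. -/
theorem X_one_dvd_quasihomogeneousDerivY {R : Type*} [CommSemiring R] {a n η : ℕ} (b : ℕ)
    (c : ℕ → R) (ha : 0 < a) (hn : 2 ≤ n) (hηn : η * a + 1 ≤ n)
    (h : ¬(c η ≠ 0 ∧ n - η * a = 1)) : X 1 ∣ quasihomogeneousDerivY a b n η c := by
  refine dvd_add (dvd_mul_of_dvd_right (dvd_pow_self _ (by omega)) _)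
    (Finset.dvd_sum fun j hj => ?_)
  obtain ⟨-, hjη⟩ := Finset.mem_Icc.mp hj
  by_cases hexp : n - j * a - 1 = 0
  · have hj : j = η := by
      have : j * a ≤ η * a := Nat.mul_le_mul_right a hjη
      have : η ≤ j := Nat.le_of_mul_le_mul_right (by omega) ha
      omega
    subst hj
    simp [not_not.mp fun hc => h ⟨hc, by omega⟩]
  · exact dvd_mul_of_dvd_right (dvd_pow_self _ hexp) _

theorem stmt3_general (a b n m η θ : ℕ) (ha : 0 < a)
    (hn : 3 ≤ n) (hnm : n ≤ m) (hηn : η * a + 1 ≤ n) (hθm : θ * a + 1 ≤ m)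
    (bc : ℕ → ℂ) (cc : ℕ → ℂ)
    (g₂ g₃ : MvPowerSeries (Fin 2) ℂ)
    (hg₂ : g₂ = C (σ := Fin 2) (R := ℂ) (n : ℂ) * X 1 ^ (n - 1) +
      ∑ j ∈ Finset.Icc 1 η,
        C (σ := Fin 2) (R := ℂ) (((n - j * a : ℕ) : ℂ) * bc j) * X 0 ^ (j * b) * X 1 ^ (n - j * a - 1))
    (hg₃ : g₃ = C (σ := Fin 2) (R := ℂ) (m : ℂ) * X 1 ^ (m - 1) +
      ∑ j ∈ Finset.Icc 1 θ,
        C (σ := Fin 2) (R := ℂ) (((m - j * a : ℕ) : ℂ) * cc j) * X 0 ^ (j * b) * X 1 ^ (m - j * a - 1))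
    (hfin : FiniteDimensional ℂ (MvPowerSeries (Fin 2) ℂ ⧸ Ideal.span {g₂, g₃})) :
    (bc η ≠ 0 ∧ n - η * a = 1) ∨ (cc θ ≠ 0 ∧ m - θ * a = 1) := by
  by_contra h
  rw [not_or] at h
  have hspan : Ideal.span {g₂, g₃} ≤ Ideal.span {X 1} := by
    rw [Ideal.span_le, Set.insert_subset_iff, Set.singleton_subset_iff]
    exact ⟨Ideal.mem_span_singleton.mpr
        (hg₂ ▸ X_one_dvd_quasihomogeneousDerivY b bc ha (by omega) hηn h.1),
      Ideal.mem_span_singleton.mpr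
        (hg₃ ▸ X_one_dvd_quasihomogeneousDerivY b cc ha (by omega) hθm h.2)⟩
  exact not_finite_quotient_of_le_span_X (j := 0) one_ne_zero hspan hfin

/-- Let `a, b, n, m` be positive integers with `3 ≤ n ≤ m`.
Let `η` be the greatest integer with `n − η·a ≥ 1` and `θ` the greatest
integer with `m − θ·a ≥ 1`, and assume `η ≥ 1`, `θ ≥ 1`. For complex numbers
`b₁, …, b_η` and `c₁, …, c_θ` define in `ℂ[[x,y]]`
`g₂ = n·y^{n−1} + Σ_{j=1}^{η} (n−ja)·b_j·x^{jb}·y^{n−ja−1}` and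
`g₃ = m·y^{m−1} + Σ_{j=1}^{θ} (m−ja)·c_j·x^{jb}·y^{m−ja−1}`.
If `ℂ[[x,y]]/(g₂, g₃)` is a finite-dimensional `ℂ`-vector space, then either
(`b_η ≠ 0` and `n − η·a = 1`) or (`c_θ ≠ 0` and `m − θ·a = 1`). -/
theorem stmt3 (a b n m η θ : ℕ) (ha : 0 < a) (hb : 0 < b)
    (hn : 3 ≤ n) (hnm : n ≤ m) (hη : 1 ≤ η) (hθ : 1 ≤ θ)
    (hηn : η * a + 1 ≤ n) (hηmax : n ≤ (η + 1) * a)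
    (hθm : θ * a + 1 ≤ m) (hθmax : m ≤ (θ + 1) * a)
    (bc : ℕ → ℂ) (cc : ℕ → ℂ)
    (g₂ g₃ : MvPowerSeries (Fin 2) ℂ)
    (hg₂ : g₂ = C (σ := Fin 2) (R := ℂ) (n : ℂ) * X 1 ^ (n - 1) +
      ∑ j ∈ Finset.Icc 1 η,
        C (σ := Fin 2) (R := ℂ) (((n - j * a : ℕ) : ℂ) * bc j) * X 0 ^ (j * b) * X 1 ^ (n - j * a - 1))
    (hg₃ : g₃ = C (σ := Fin 2) (R := ℂ) (m : ℂ) * X 1 ^ (m - 1) +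
      ∑ j ∈ Finset.Icc 1 θ,
        C (σ := Fin 2) (R := ℂ) (((m - j * a : ℕ) : ℂ) * cc j) * X 0 ^ (j * b) * X 1 ^ (m - j * a - 1))
    (hfin : FiniteDimensional ℂ (MvPowerSeries (Fin 2) ℂ ⧸ Ideal.span {g₂, g₃})) :
    (bc η ≠ 0 ∧ n - η * a = 1) ∨ (cc θ ≠ 0 ∧ m - θ * a = 1) :=
  stmt3_general a b n m η θ ha hn hnm hηn hθm bc cc g₂ g₃ hg₂ hg₃ hfin
end

section
/- Let h ∈ ℂ[u,v] be a polynomial in two variables and define the polynomial map f : ℂ² → ℂ³ by f(x,y) = (x, y², y·h(x, y²)). Then the union of the double point set {(x,y) ∈ ℂ² : ∃ (x',y') ∈ ℂ² with (x',y') ≠ (x,y) and f(x',y') = f(x,y)} with the singular set of f (the set of points where the Jacobian matrix of f has rank < 2, i.e., where the differential of f is not injective) is exactly the plane curve {(x,y) ∈ ℂ² : h(x, y²) = 0}. -/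
/-!
A second preimage of `f(x, y)` can only be `(x, -y)`, and it has the same image exactly when
`y ≠ 0` and `h(x, y²) = 0`. The differential sends `(v₁, v₂)` to
`(v₁, 2y·v₂, y·ℓ(v) + h(x, y²)·v₂)`, so it fails to be injective exactly when
`y = 0 = h(x, y²)`. The two cases together make up the curve `h(x, y²) = 0`.
-/

open MvPolynomial Function

section FoldMap

variable {K : Type*} [CommRing K]

def foldMap (g : K × K → K) (p : K × K) : K × K × K :=
  (p.1, p.2 ^ 2, p.2 * g (p.1, p.2 ^ 2))

theorem exists_ne_foldMap_eq_iff [NoZeroDivisors K] [NeZero (2 : K)] (g : K × K → K) (p : K × K) :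
    (∃ q, q ≠ p ∧ foldMap g q = foldMap g p) ↔ p.2 ≠ 0 ∧ g (p.1, p.2 ^ 2) = 0 := by
  obtain ⟨x, y⟩ := p
  have two_ne : (2 : K) ≠ 0 := NeZero.ne 2
  constructor
  · rintro ⟨⟨x', y'⟩, hne, hfq⟩
    simp only [foldMap, Prod.mk.injEq] at hfq ⊢
    obtain ⟨hx, hsq, hthird⟩ := hfq
    rw [hx] at hne hthird
    have hy' : y' ≠ y := fun h => hne (by rw [h])
    have hy'_eq : y' = -y := (sq_eq_sq_iff_eq_or_eq_neg.mp hsq).resolve_left hy'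
    have hy : y ≠ 0 := fun h => hy' (by rw [hy'_eq, h, neg_zero])
    subst hy'_eq
    rw [hsq] at hthird
    refine ⟨hy, ?_⟩
    have : (2 * y) * g (x, y ^ 2) = 0 := by linear_combination -hthird
    exact (mul_eq_zero.mp this).resolve_left (mul_ne_zero two_ne hy)
  · rintro ⟨hy, hg⟩
    refine ⟨(x, -y), fun h => hy ?_, ?_⟩
    · have : -y = y := congrArg Prod.snd h
      exact (mul_eq_zero.mp (by linear_combination -this : (2 : K) * y = 0)).resolve_left two_ne
    · simp only [foldMap, neg_sq, hg, mul_zero]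

end FoldMap

section Derivative

variable {𝕜 : Type*} [NontriviallyNormedField 𝕜] {g : 𝕜 × 𝕜 → 𝕜} {p : 𝕜 × 𝕜}

theorem fderiv_foldMap_apply (hg : DifferentiableAt 𝕜 g (p.1, p.2 ^ 2)) (v : 𝕜 × 𝕜) :
    fderiv 𝕜 (foldMap g) p v =
      (v.1, 2 * p.2 * v.2,
        p.2 * fderiv 𝕜 (fun q : 𝕜 × 𝕜 => g (q.1, q.2 ^ 2)) p v + g (p.1, p.2 ^ 2) * v.2) := by
  have hsnd : HasFDerivAt (fun q : 𝕜 × 𝕜 => q.2) (ContinuousLinearMap.snd 𝕜 𝕜 𝕜) p :=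
    hasFDerivAt_snd
  have hsq : HasFDerivAt (fun q : 𝕜 × 𝕜 => q.2 ^ 2)
      ((2 * p.2) • ContinuousLinearMap.snd 𝕜 𝕜 𝕜) p := by
    convert hsnd.fun_mul hsnd using 1 <;> ext <;> simp [pow_two, two_mul]
  have hinner : DifferentiableAt 𝕜 (fun q : 𝕜 × 𝕜 => (q.1, q.2 ^ 2)) p :=
    differentiableAt_fst.prodMk hsq.differentiableAt
  have hcomp : DifferentiableAt 𝕜 (fun q : 𝕜 × 𝕜 => g (q.1, q.2 ^ 2)) p :=
    hg.comp p hinner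
  have hF : HasFDerivAt (foldMap g) _ p :=
    hasFDerivAt_fst.prodMk (hsq.prodMk (hsnd.fun_mul hcomp.hasFDerivAt))
  rw [hF.fderiv]
  simp [smul_eq_mul, mul_assoc]

theorem injective_fderiv_foldMap_iff [NeZero (2 : 𝕜)] (hg : DifferentiableAt 𝕜 g (p.1, p.2 ^ 2)) :
    Injective (fderiv 𝕜 (foldMap g) p) ↔ p.2 ≠ 0 ∨ g (p.1, p.2 ^ 2) ≠ 0 := by
  have two_ne : (2 : 𝕜) ≠ 0 := NeZero.ne 2
  have hD := fderiv_foldMap_apply hg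
  generalize g (p.1, p.2 ^ 2) = c at hD ⊢
  generalize fderiv 𝕜 (fun q : 𝕜 × 𝕜 => g (q.1, q.2 ^ 2)) p = ℓ at hD
  rw [injective_iff_map_eq_zero]
  constructor
  · intro hinj
    by_contra! h
    have := hinj (0, 1) (by simp [hD, h.1, h.2])
    simp at this
  · intro h v hv
    simp only [hD, Prod.ext_iff, Prod.fst_zero, Prod.snd_zero] at hv
    obtain ⟨hv1, hv2, hv3⟩ := hv
    refine Prod.ext hv1 ?_
    rcases eq_or_ne p.2 0 with hy | hy
    · simp only [hy, zero_mul, zero_add] at hv3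
      exact (mul_eq_zero.mp hv3).resolve_left (h.resolve_left (not_not.mpr hy))
    · exact (mul_eq_zero.mp hv2).resolve_left (mul_ne_zero two_ne hy)

theorem doublePoints_union_singularSet_foldMap [NeZero (2 : 𝕜)] (hg : Differentiable 𝕜 g) :
    {p : 𝕜 × 𝕜 | (∃ q, q ≠ p ∧ foldMap g q = foldMap g p) ∨
        ¬ Injective (fderiv 𝕜 (foldMap g) p)} = {p | g (p.1, p.2 ^ 2) = 0} := by
  ext p
  simp only [Set.mem_ofPred_eq, exists_ne_foldMap_eq_iff, injective_fderiv_foldMap_iff (hg _)]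
  tauto

end Derivative

theorem differentiable_eval_finTwo (h : MvPolynomial (Fin 2) ℂ) :
    Differentiable ℂ (fun u : ℂ × ℂ => eval ![u.1, u.2] h) := by
  refine fun u => (AnalyticAt.aeval_mvPolynomial (fun i => ?_) h).differentiableAt
  fin_cases i
  · simpa using analyticAt_fst
  · simpa using analyticAt_snd

/-- Let `h ∈ ℂ[u,v]` and let `f : ℂ² → ℂ³` be the polynomial
map `f(x,y) = (x, y², y·h(x,y²))`. Then the union of the double point set
`{(x,y) : ∃ (x',y') ≠ (x,y), f(x',y') = f(x,y)}` with the singular set of `f`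
(the points where the differential of `f` is not injective, i.e. where the
Jacobian matrix has rank `< 2`) is exactly the plane curve `{(x,y) : h(x,y²)=0}`. -/
theorem stmt4 (h : MvPolynomial (Fin 2) ℂ) (f : ℂ × ℂ → ℂ × ℂ × ℂ)
    (hf : f = fun p => (p.1, p.2 ^ 2, p.2 * MvPolynomial.eval ![p.1, p.2 ^ 2] h)) :
    {p : ℂ × ℂ | (∃ q : ℂ × ℂ, q ≠ p ∧ f q = f p) ∨
        ¬ Function.Injective (fderiv ℂ f p)} =
      {p : ℂ × ℂ | MvPolynomial.eval ![p.1, p.2 ^ 2] h = 0} := by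
  have hfold : f = foldMap (fun u : ℂ × ℂ => eval ![u.1, u.2] h) := hf
  rw [hfold]
  exact doublePoints_union_singularSet_foldMap (differentiable_eval_finTwo h)
end

section
/- Let a and b be coprime positive integers, α a nonzero complex number, and h ∈ ℂ[u,v] a polynomial; define f : ℂ² → ℂ³ by f(x,y) = (x, y², y·h(x, y²)). Let C = {(x,y) ∈ ℂ² : y^a = α x^b} and assume h(x, y²) = 0 for all (x,y) ∈ C. Then: (i) if a is even, for every (x,y) ∈ C the point (x,−y) also lies in C and f(x,−y) = f(x,y); moreover, for every (x,y) ∈ C with y ≠ 0, the point (x,−y) is the unique point of ℂ² distinct from (x,y) having the same image under f (so the restriction of f to C is generically 2-to-1); (ii) if a is odd, the restriction of f to C is injective, and the curve C' = {(x,y) ∈ ℂ² : y^a = −α x^b} satisfies h(x,y²) = 0 for all (x,y) ∈ C' and f(C') = f(C). -/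
/-- Let `a, b` be coprime positive integers, `α ≠ 0`, `h ∈ ℂ[u,v]`,
and `f(x,y) = (x, y², y·h(x,y²))`. Let `C = {(x,y) : y^a = α x^b}` and assume
`h(x,y²) = 0` on `C`. Then:
(i) if `a` is even, for every `(x,y) ∈ C` the point `(x,−y)` also lies in `C`
and `f(x,−y) = f(x,y)`; moreover, for every `(x,y) ∈ C` with `y ≠ 0`, `(x,−y)`
is the unique point distinct from `(x,y)` with the same image under `f`
(so `f` restricted to `C` is generically 2-to-1);
(ii) if `a` is odd, `f` is injective on `C`, and the curve
`C' = {(x,y) : y^a = −α x^b}` satisfies `h(x,y²) = 0` on `C'` and `f(C') = f(C)`. -/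
theorem stmt5 (a b : ℕ) (ha : 0 < a) (hb : 0 < b) (hab : Nat.Coprime a b)
    (α : ℂ) (hα : α ≠ 0) (h : MvPolynomial (Fin 2) ℂ)
    (f : ℂ × ℂ → ℂ × ℂ × ℂ)
    (hf : f = fun p => (p.1, p.2 ^ 2, p.2 * MvPolynomial.eval ![p.1, p.2 ^ 2] h))
    (C : Set (ℂ × ℂ)) (hC : C = {p : ℂ × ℂ | p.2 ^ a = α * p.1 ^ b})
    (hhC : ∀ p ∈ C, MvPolynomial.eval ![p.1, p.2 ^ 2] h = 0) :
    (Even a →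
      (∀ p ∈ C, ((p.1, -p.2) : ℂ × ℂ) ∈ C ∧ f (p.1, -p.2) = f p) ∧
      (∀ p ∈ C, p.2 ≠ 0 → ∀ q : ℂ × ℂ, q ≠ p → f q = f p → q = (p.1, -p.2))) ∧
    (Odd a →
      Set.InjOn f C ∧
      (∀ p : ℂ × ℂ, p.2 ^ a = -α * p.1 ^ b →
        MvPolynomial.eval ![p.1, p.2 ^ 2] h = 0) ∧
      f '' {p : ℂ × ℂ | p.2 ^ a = -α * p.1 ^ b} = f '' C) := by
  subst hf hC
  have sq_cases : ∀ v y : ℂ, v ^ 2 = y ^ 2 → v = y ∨ v = -y := by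
    intro v y hvy
    have hz : (v - y) * (v + y) = 0 := by linear_combination hvy
    rcases mul_eq_zero.mp hz with h1 | h1
    · exact Or.inl (sub_eq_zero.mp h1)
    · exact Or.inr (eq_neg_of_add_eq_zero_left h1)
  have feq : ∀ p : ℂ × ℂ, MvPolynomial.eval ![p.1, p.2 ^ 2] h = 0 →
      ((p.1, (-p.2) ^ 2, (-p.2) * MvPolynomial.eval ![p.1, (-p.2) ^ 2] h) : ℂ × ℂ × ℂ)
        = (p.1, p.2 ^ 2, p.2 * MvPolynomial.eval ![p.1, p.2 ^ 2] h) := by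
    intro p e1
    rw [neg_sq, e1]
    norm_num
  constructor
  · intro hae
    constructor
    · intro p hp
      have hmem : ((p.1, -p.2) : ℂ × ℂ) ∈ {p : ℂ × ℂ | p.2 ^ a = α * p.1 ^ b} := by
        simpa [hae.neg_pow] using hp
      exact ⟨hmem, feq p (hhC p hp)⟩
    · intro p hp hy q hq hfq
      simp only [Prod.mk.injEq] at hfq
      obtain ⟨h1, h2, -⟩ := hfq
      rcases sq_cases _ _ h2 with h3 | h3
      · exact absurd (Prod.ext h1 h3) hq
      · exact Prod.ext h1 h3
  · intro hao
    have key : ∀ y : ℂ, (-y : ℂ) ^ a = y ^ a → y = 0 := by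
      intro y hy
      rw [hao.neg_pow] at hy
      have h2 : (2 : ℂ) * y ^ a = 0 := by linear_combination -hy
      rcases mul_eq_zero.mp h2 with h1 | h1
      · norm_num at h1
      · exact pow_eq_zero_iff ha.ne' |>.mp h1
    have memC : ∀ p : ℂ × ℂ, p.2 ^ a = -α * p.1 ^ b →
        ((p.1, -p.2) : ℂ × ℂ) ∈ {p : ℂ × ℂ | p.2 ^ a = α * p.1 ^ b} := by
      intro p hp
      simp only [Set.mem_setOf_eq, hao.neg_pow]
      linear_combination -hp
    have hC' : ∀ p : ℂ × ℂ, p.2 ^ a = -α * p.1 ^ b →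
        MvPolynomial.eval ![p.1, p.2 ^ 2] h = 0 := by
      intro p hp
      have := hhC _ (memC p hp)
      simpa using this
    refine ⟨?_, hC', ?_⟩
    · intro p hp q hq hfq
      simp only [Prod.mk.injEq] at hfq
      obtain ⟨h1, h2, -⟩ := hfq
      rcases sq_cases _ _ h2 with h3 | h3
      · exact Prod.ext h1 h3
      · have hp' : p.2 ^ a = α * p.1 ^ b := hp
        have hq' : q.2 ^ a = α * q.1 ^ b := hq
        have heq : (-q.2 : ℂ) ^ a = q.2 ^ a := by rw [← h3, hp', hq', h1]
        have hz := key _ heq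
        have hz' : p.2 = 0 := by rw [h3, hz, neg_zero]
        exact Prod.ext h1 (by rw [hz', hz])
    · ext z
      simp only [Set.mem_image, Set.mem_setOf_eq]
      constructor
      · rintro ⟨p, hp, rfl⟩
        refine ⟨(p.1, -p.2), memC p hp, ?_⟩
        exact feq p (hC' p hp)
      · rintro ⟨p, hp, rfl⟩
        refine ⟨(p.1, -p.2), ?_, feq p (hhC p hp)⟩
        simp only [Set.mem_setOf_eq, hao.neg_pow]
        linear_combination -hp
end

section
/- Let a, b and d_1 ≤ d_2 ≤ d_3, e_1 ≤ e_2 ≤ e_3 be positive integers. Define the rational numbers δ = d_1 d_2 d_3/(a b), ε = d_1 + d_2 + d_3 − a − b, δ' = e_1 e_2 e_3/(a b), ε' = e_1 + e_2 + e_3 − a − b. Assume: (i) δ − ε = δ' − ε' and δ − ε ≠ 0; (ii) (δ − ε)(δ − 2ε) = (δ' − ε')(δ' − 2ε'); (iii) d_1 d_2 + d_1 d_3 + d_2 d_3 − (a+b)(d_1 + d_2 + d_3) = e_1 e_2 + e_1 e_3 + e_2 e_3 − (a+b)(e_1 + e_2 + e_3). Then d_i = e_i for i = 1, 2, 3. 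-/
set_option maxHeartbeats 1000000 in
/-- Let `a, b` and `d₁ ≤ d₂ ≤ d₃`, `e₁ ≤ e₂ ≤ e₃` be positive
integers, and set (as rational numbers) `δ = d₁d₂d₃/(ab)`,
`ε = d₁ + d₂ + d₃ − a − b`, `δ' = e₁e₂e₃/(ab)`, `ε' = e₁ + e₂ + e₃ − a − b`.
Assume (i) `δ − ε = δ' − ε'` and `δ − ε ≠ 0`;
(ii) `(δ − ε)(δ − 2ε) = (δ' − ε')(δ' − 2ε')`;
(iii) `d₁d₂ + d₁d₃ + d₂d₃ − (a+b)(d₁+d₂+d₃) = e₁e₂ + e₁e₃ + e₂e₃ − (a+b)(e₁+e₂+e₃)`.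
Then `d_i = e_i` for `i = 1, 2, 3`. -/
theorem stmt7 (a b d₁ d₂ d₃ e₁ e₂ e₃ : ℕ)
    (ha : 0 < a) (hb : 0 < b)
    (hd₁ : 0 < d₁) (hd₁₂ : d₁ ≤ d₂) (hd₂₃ : d₂ ≤ d₃)
    (he₁ : 0 < e₁) (he₁₂ : e₁ ≤ e₂) (he₂₃ : e₂ ≤ e₃)
    (δ ε δ' ε' : ℚ)
    (hδ : δ = (d₁ * d₂ * d₃ : ℚ) / (a * b))
    (hε : ε = (d₁ : ℚ) + d₂ + d₃ - a - b)
    (hδ' : δ' = (e₁ * e₂ * e₃ : ℚ) / (a * b))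
    (hε' : ε' = (e₁ : ℚ) + e₂ + e₃ - a - b)
    (h1 : δ - ε = δ' - ε') (h1' : δ - ε ≠ 0)
    (h2 : (δ - ε) * (δ - 2 * ε) = (δ' - ε') * (δ' - 2 * ε'))
    (h3 : (d₁ * d₂ + d₁ * d₃ + d₂ * d₃ : ℚ) - (a + b) * (d₁ + d₂ + d₃)
        = (e₁ * e₂ + e₁ * e₃ + e₂ * e₃ : ℚ) - (a + b) * (e₁ + e₂ + e₃)) :
    d₁ = e₁ ∧ d₂ = e₂ ∧ d₃ = e₃ := by
  -- cancel δ - ε to get δ - 2ε = δ' - 2ε'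
  rw [h1] at h2 h1'
  have h4 : δ - 2 * ε = δ' - 2 * ε' := mul_left_cancel₀ h1' h2
  have hεε : ε = ε' := by linarith
  have hδδ : δ = δ' := by linarith
  -- equal sums
  have hsQ : (d₁ : ℚ) + d₂ + d₃ = (e₁ : ℚ) + e₂ + e₃ := by
    rw [hε, hε'] at hεε; linarith
  have hab : ((a : ℚ) * b) ≠ 0 := by positivity
  -- equal products
  have hpQ : (d₁ : ℚ) * d₂ * d₃ = (e₁ : ℚ) * e₂ * e₃ := by
    rw [hδ, hδ'] at hδδ
    field_simp at hδδ
    linarith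
  -- equal second symmetric functions
  have hs2Q : (d₁ : ℚ) * d₂ + d₁ * d₃ + d₂ * d₃ = (e₁ : ℚ) * e₂ + e₁ * e₃ + e₂ * e₃ := by
    nlinarith [h3, hsQ]
  -- e₁ is a root of (X-d₁)(X-d₂)(X-d₃)
  have key1 : ((e₁ : ℚ) - d₁) * ((e₁ : ℚ) - d₂) * ((e₁ : ℚ) - d₃) = 0 := by
    linear_combination (-(e₁ : ℚ)^2) * hsQ + (e₁ : ℚ) * hs2Q - hpQ
  have key2 : ((d₁ : ℚ) - e₁) * ((d₁ : ℚ) - e₂) * ((d₁ : ℚ) - e₃) = 0 := by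
    linear_combination ((d₁ : ℚ)^2) * hsQ - (d₁ : ℚ) * hs2Q + hpQ
  have hmem1 : e₁ = d₁ ∨ e₁ = d₂ ∨ e₁ = d₃ := by
    rcases mul_eq_zero.1 key1 with h | h
    · rcases mul_eq_zero.1 h with h | h
      · left; exact_mod_cast sub_eq_zero.1 h
      · right; left; exact_mod_cast sub_eq_zero.1 h
    · right; right; exact_mod_cast sub_eq_zero.1 h
  have hmem2 : d₁ = e₁ ∨ d₁ = e₂ ∨ d₁ = e₃ := by
    rcases mul_eq_zero.1 key2 with h | h
    · rcases mul_eq_zero.1 h with h | h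
      · left; exact_mod_cast sub_eq_zero.1 h
      · right; left; exact_mod_cast sub_eq_zero.1 h
    · right; right; exact_mod_cast sub_eq_zero.1 h
  have h11 : d₁ = e₁ := by omega
  -- reduce to the remaining two values
  have hsN : d₁ + d₂ + d₃ = e₁ + e₂ + e₃ := by exact_mod_cast hsQ
  have hB : (d₂ : ℚ) + d₃ = (e₂ : ℚ) + e₃ := by
    have : d₂ + d₃ = e₂ + e₃ := by omega
    exact_mod_cast this
  have hA : (d₁ : ℚ) = e₁ := by exact_mod_cast h11
  have hprod : (d₂ : ℚ) * d₃ = (e₂ : ℚ) * e₃ := by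
    linear_combination hs2Q - ((d₂ : ℚ) + d₃) * hA - (e₁ : ℚ) * hB
  have key3 : ((d₂ : ℚ) - e₂) * ((d₂ : ℚ) - e₃) = 0 := by
    linear_combination (d₂ : ℚ) * hB - hprod
  have hmem3 : d₂ = e₂ ∨ d₂ = e₃ := by
    rcases mul_eq_zero.1 key3 with h | h
    · left; exact_mod_cast sub_eq_zero.1 h
    · right; exact_mod_cast sub_eq_zero.1 h
  refine ⟨h11, ?_, ?_⟩ <;> omega
end

section
/- The image of the polynomial map f : ℂ² → ℂ³ defined by f(x,y) = (x, y³, x·y) is exactly the set {(X,Y,Z) ∈ ℂ³ : Z³ − X³·Y = 0}. -/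
/-! Away from `X = 0` the point `(X, Y, Z)` of the surface `Zⁿ = Xⁿ Y` is the image of `(X, Z / X)`;
on the line `X = 0` the equation forces `Z = 0`, and `(0, y)` with `y` an `n`-th root of `Y` works. -/

section PowMulImage

variable {K : Type*} [Field K] [IsAlgClosed K] {n : ℕ}

theorem exists_pow_eq_and_mul_eq_of_pow_eq (hn : n ≠ 0) {X Y Z : K}
    (h : Z ^ n = X ^ n * Y) : ∃ y, y ^ n = Y ∧ X * y = Z := by
  by_cases hX : X = 0
  · obtain ⟨y, hy⟩ := IsAlgClosed.exists_pow_nat_eq Y (Nat.pos_of_ne_zero hn)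
    have hZ : Z = 0 := pow_eq_zero_iff hn |>.mp (by simpa [hX, hn] using h)
    exact ⟨y, hy, by rw [hX, hZ, zero_mul]⟩
  · refine ⟨Z / X, ?_, mul_div_cancel₀ Z hX⟩
    rw [div_pow, h, mul_div_cancel_left₀ Y (pow_ne_zero n hX)]

theorem range_prodMk_pow_mul (hn : n ≠ 0) :
    Set.range (fun p : K × K => ((p.1, p.2 ^ n, p.1 * p.2) : K × K × K)) =
      {q : K × K × K | q.2.2 ^ n = q.1 ^ n * q.2.1} := by
  ext ⟨X, Y, Z⟩
  simp only [Set.mem_range, Set.mem_ofPred_eq, Prod.exists, Prod.mk.injEq]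
  constructor
  · rintro ⟨x, y, rfl, rfl, rfl⟩
    ring
  · intro h
    obtain ⟨y, hy, hZ⟩ := exists_pow_eq_and_mul_eq_of_pow_eq hn h
    exact ⟨X, y, rfl, hy, hZ⟩

end PowMulImage

/-- The image of the polynomial map `f : ℂ² → ℂ³`,
`f(x,y) = (x, y³, x·y)`, is exactly `{(X,Y,Z) ∈ ℂ³ : Z³ − X³·Y = 0}`. -/
theorem stmt10 :
    Set.range (fun p : ℂ × ℂ => ((p.1, p.2 ^ 3, p.1 * p.2) : ℂ × ℂ × ℂ)) =
      {q : ℂ × ℂ × ℂ | q.2.2 ^ 3 - q.1 ^ 3 * q.2.1 = 0} := by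
  simp only [sub_eq_zero]
  exact range_prodMk_pow_mul three_ne_zero
end

section
/- The image of the polynomial map g : ℂ² → ℂ³ defined by g(x,y) = (x, y³, x·y + y²) is exactly the set {(X,Y,Z) ∈ ℂ³ : Z³ − X³·Y − Y² − 3·X·Y·Z = 0}. -/
/-- The image of the polynomial map `g : ℂ² → ℂ³`,
`g(x,y) = (x, y³, x·y + y²)`, is exactly
`{(X,Y,Z) ∈ ℂ³ : Z³ − X³·Y − Y² − 3·X·Y·Z = 0}`. -/
theorem stmt11 :
    Set.range (fun p : ℂ × ℂ => ((p.1, p.2 ^ 3, p.1 * p.2 + p.2 ^ 2) : ℂ × ℂ × ℂ)) =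
      {q : ℂ × ℂ × ℂ |
        q.2.2 ^ 3 - q.1 ^ 3 * q.2.1 - q.2.1 ^ 2 - 3 * q.1 * q.2.1 * q.2.2 = 0} := by
  ext q
  obtain ⟨X, Y, Z⟩ := q
  simp only [Set.mem_range, Set.mem_setOf_eq, Prod.mk.injEq]
  constructor
  · rintro ⟨⟨x, y⟩, hx, hy, hz⟩
    subst hx hy hz
    ring
  · intro h
    -- get a cube root of Y
    obtain ⟨y, hy⟩ : ∃ y : ℂ, y ^ 3 = Y :=
      IsAlgClosed.exists_pow_nat_eq Y (n := 3) (by norm_num)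
    -- get a primitive cube root of unity
    obtain ⟨ω, hω⟩ : ∃ ω : ℂ, ω ^ 2 + ω + 1 = 0 := by
      rcases Complex.exists_root (f := Polynomial.X ^ 2 + Polynomial.X + 1)
        (by
          have : (Polynomial.X ^ 2 + Polynomial.X + 1 : Polynomial ℂ).degree = 2 := by
            compute_degree!
          rw [this]; norm_num) with ⟨ω, hω⟩
      refine ⟨ω, ?_⟩
      simpa [Polynomial.IsRoot] using hω
    -- factorization of the cubic in Z
    have key : (Z - (X * y + y ^ 2)) * (Z - (X * (ω * y) + (ω * y) ^ 2)) *
        (Z - (X * (ω ^ 2 * y) + (ω ^ 2 * y) ^ 2)) = 0 := by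
      have hY : Y = y ^ 3 := hy.symm
      subst hY
      linear_combination h + ((-1 : ℂ) * y ^ 2 * Z ^ 2 + y ^ 2 * Z ^ 2 * ω
        - y ^ 2 * Z ^ 2 * ω ^ 2 + y ^ 4 * Z * ω ^ 2 - y ^ 4 * Z * ω ^ 3
        + y ^ 4 * Z * ω ^ 4 + y ^ 6 - y ^ 6 * ω + y ^ 6 * ω ^ 3 - y ^ 6 * ω ^ 4
        - X * y * Z ^ 2 + 3 * X * y ^ 3 * Z - 2 * X * y ^ 3 * Z * ω
        + X * y ^ 3 * Z * ω ^ 2 + X * y ^ 3 * Z * ω ^ 3 - X * y ^ 5 * ω ^ 4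
        + X ^ 2 * y ^ 2 * Z * ω - X ^ 2 * y ^ 4 * ω ^ 3 + X ^ 3 * y ^ 3
        - X ^ 3 * y ^ 3 * ω) * hω
    have hω3 : ω ^ 3 = 1 := by linear_combination (ω - 1) * hω
    rcases mul_eq_zero.mp key with h12 | h3
    · rcases mul_eq_zero.mp h12 with h1 | h2
      · exact ⟨(X, y), rfl, hy, by linear_combination -h1⟩
      · refine ⟨(X, ω * y), rfl, ?_, by linear_combination -h2⟩
        rw [mul_pow, hω3, one_mul, hy]
    · refine ⟨(X, ω ^ 2 * y), rfl, ?_, by linear_combination -h3⟩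
      rw [mul_pow, ← pow_mul, show 2 * 3 = 3 * 2 by ring, pow_mul, hω3, one_pow, one_mul, hy]
end
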